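/- For every positive integer k ≥ 1 and n ≥ 1, there exists a type-preserving involution φ_k on partitions of [n] exchanging the statistics dcr_k and dne_k; here type-preserving means φ_k(π) has the same sets of openers, closers, singletons, and transients as π. -/

import Mathlib

open Finset

/-- Set partitions of `[n] = {1, …, n}`. -/
abbrev SP (n : ℕ) := Finpartition (Finset.Icc 1 n)

/-- `(i, j)` is an edge of the diagram of the partition `P`: either a loop `(i, i)`
on a singleton block, or `i < j` are in a common block with no element of that
block strictly between them. -/
def IsEdge {n : ℕ} (P : SP n) (i j : ℕ) : Prop :=
  (i = j ∧ {i} ∈ P.parts) ∨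
  (i < j ∧ ∃ B ∈ P.parts, i ∈ B ∧ j ∈ B ∧ ∀ m ∈ B, ¬(i < m ∧ m < j))

/-- Two edges `e₁ = (i₁, j₁)` and `e₂ = (i₂, j₂)` form a `k`-distant crossing:
`i₁ < i₂ ≤ j₁ < j₂` and `j₁ - i₂ ≥ k`. -/
def CrossPair (k : ℕ) (e₁ e₂ : ℕ × ℕ) : Prop :=
  e₁.1 < e₂.1 ∧ e₂.1 ≤ e₁.2 ∧ e₁.2 < e₂.2 ∧ k ≤ e₁.2 - e₂.1

/-- Two edges `e₁ = (i₁, j₁)` and `e₂ = (i₂, j₂)` form a `k`-distant nesting: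
`i₁ < i₂ ≤ j₂ < j₁` and `j₂ - i₂ ≥ k`. -/
def NestPair (k : ℕ) (e₁ e₂ : ℕ × ℕ) : Prop :=
  e₁.1 < e₂.1 ∧ e₂.1 ≤ e₂.2 ∧ e₂.2 < e₁.2 ∧ k ≤ e₂.2 - e₂.1

/-- The number of `k`-distant crossings of the partition `P`. -/
noncomputable def dcr {n : ℕ} (k : ℕ) (P : SP n) : ℕ :=
  Set.ncard {p : (ℕ × ℕ) × ℕ × ℕ |
    IsEdge P p.1.1 p.1.2 ∧ IsEdge P p.2.1 p.2.2 ∧ CrossPair k p.1 p.2}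

/-- The number of `k`-distant nestings of the partition `P`. -/
noncomputable def dne {n : ℕ} (k : ℕ) (P : SP n) : ℕ :=
  Set.ncard {p : (ℕ × ℕ) × ℕ × ℕ |
    IsEdge P p.1.1 p.1.2 ∧ IsEdge P p.2.1 p.2.2 ∧ NestPair k p.1 p.2}

/-- `P` is a complete matching: every block has exactly two elements. -/
def IsMatching {n : ℕ} (P : SP n) : Prop := ∀ B ∈ P.parts, B.card = 2

/-- The number of `k`-distant noncrossing complete matchings of `[m]`. -/
noncomputable def NCM (k m : ℕ) : ℕ :=
  Set.ncard {P : SP m | IsMatching P ∧ dcr k P = 0}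

/-- The number of `k`-distant noncrossing partitions of `[n]`. -/
noncomputable def NCP (k n : ℕ) : ℕ :=
  Set.ncard {P : SP n | dcr k P = 0}

/-- Openers of `P`: minimal elements of blocks of size at least two. -/
def openers {n : ℕ} (P : SP n) : Set ℕ :=
  {v | ∃ B ∈ P.parts, v ∈ B ∧ 2 ≤ B.card ∧ ∀ m ∈ B, v ≤ m}

/-- Closers of `P`: maximal elements of blocks of size at least two. -/
def closers {n : ℕ} (P : SP n) : Set ℕ :=
  {v | ∃ B ∈ P.parts, v ∈ B ∧ 2 ≤ B.card ∧ ∀ m ∈ B, m ≤ v}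

/-- Singletons of `P`. -/
def singletons {n : ℕ} (P : SP n) : Set ℕ := {v | {v} ∈ P.parts}

/-- Transients of `P`: elements of a block that are neither its minimum nor its
maximum (equivalently, vertices incident to two edges of the diagram). -/
def transients {n : ℕ} (P : SP n) : Set ℕ :=
  {v | ∃ B ∈ P.parts, v ∈ B ∧ (∃ m ∈ B, m < v) ∧ (∃ m ∈ B, v < m)}

/-!
Encode a partition by its arcs: `c j = some i` when `i` is the predecessor of `j` in its block.
A vertex's type only records whether it is a left end and whether it is a right end of an arc, so
any re-pairing of left ends with right ends that keeps both sets is type-preserving. For an arc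
`(i, j)` call an open arc `(x, y)` (with `x < j < y`) far if `x + k ≤ j`; then `(i, j)` is the left
arc of as many `k`-distant crossings as there are far open arcs with `x > i`, and (when `i + k ≤ j`)
the inner arc of as many `k`-distant nestings as there are far open arcs with `x < i`.

Sweep `j = 1, 2, …`. An arc `(i, j)` with `j < i + k` is kept. Otherwise `j` is joined to the far
open left end, in the partition being built, whose rank from above equals the rank of `i` from below
among the old far open left ends. By induction along the sweep the near open left ends of the two
partitions coincide and the far ones are equinumerous, so the choice exists; the construction
keeps the left ends, is its own inverse, and exchanges the two counts arc by arc.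
-/

namespace Finpartition

variable {α : Type*} [DecidableEq α] {s : Finset α}

lemma mem_part_comm (P : Finpartition s) {a b : α} : a ∈ P.part b ↔ b ∈ P.part a := by
  simp only [mem_part_iff_exists]
  exact ⟨fun ⟨p, hp, ha, hb⟩ => ⟨p, hp, hb, ha⟩, fun ⟨p, hp, hb, ha⟩ => ⟨p, hp, ha, hb⟩⟩

lemma part_eq_part_of_mem (P : Finpartition s) {a b : α} (h : a ∈ P.part b) :
    P.part a = P.part b :=
  P.part_eq_of_mem (P.part_mem.2 (P.part_nonempty.1 ⟨a, h⟩)) h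

lemma ext_of_mem_part {P Q : Finpartition s} (h : ∀ a b, b ∈ P.part a ↔ b ∈ Q.part a) :
    P = Q := by
  suffices key : ∀ P Q : Finpartition s, (∀ a, P.part a = Q.part a) → P.parts ⊆ Q.parts by
    have hpart a : P.part a = Q.part a := Finset.ext (h a)
    exact Finpartition.ext <|
      Finset.Subset.antisymm (key P Q hpart) (key Q P fun a => (hpart a).symm)
  intro P Q hpart B hB
  obtain ⟨a, ha⟩ := P.nonempty_of_mem_parts hB
  rw [← P.part_eq_of_mem hB ha, hpart]
  exact Q.part_mem.2 (P.le hB ha)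

end Finpartition

lemma Set.ncard_eq_sum_ncard_fiber {α β : Type*} [DecidableEq β] {s : Set α} (hs : s.Finite)
    {t : Finset β} {f : α → β} (hf : ∀ a ∈ s, f a ∈ t) :
    s.ncard = ∑ b ∈ t, {a ∈ s | f a = b}.ncard := by
  lift s to Finset α using hs
  rw [Set.ncard_coe_finset, card_eq_sum_card_fiberwise hf]
  refine sum_congr rfl fun b _ => ?_
  rw [← Set.ncard_coe_finset, coe_filter]
  rfl

namespace DistantCrossing

open scoped Classical

section Rank

variable {α : Type*} [LinearOrder α] {F : Finset α} {x : α}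

def countAbove (F : Finset α) (x : α) : ℕ := #(F.filter (x < ·))

def countBelow (F : Finset α) (x : α) : ℕ := #(F.filter (· < x))

lemma countBelow_add_countAbove (hx : x ∈ F) : countBelow F x + countAbove F x + 1 = #F := by
  have hsplit : F.filter (¬ · < x) = insert x (F.filter (x < ·)) := by
    ext y
    simp only [mem_filter, mem_insert, not_lt]
    constructor
    · rintro ⟨hy, hxy⟩
      exact hxy.eq_or_lt.imp Eq.symm fun h => ⟨hy, h⟩
    · rintro (rfl | ⟨hy, hxy⟩)
      exacts [⟨hx, le_rfl⟩, ⟨hy, hxy.le⟩]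
  rw [countBelow, countAbove, ← card_filter_add_card_filter_not (s := F) (· < x), hsplit,
    card_insert_of_notMem (by simp)]
  omega

lemma countAbove_strictAntiOn (F : Finset α) : StrictAntiOn (countAbove F) F := by
  intro x _ y hy hxy
  refine card_lt_card ((ssubset_iff_of_subset fun z hz => ?_).2 ⟨y, ?_, ?_⟩)
  · simp only [mem_filter] at hz ⊢
    exact ⟨hz.1, hxy.trans hz.2⟩
  · exact mem_filter.2 ⟨hy, hxy⟩
  · simp

lemma exists_countAbove_eq {r : ℕ} (hr : r < #F) : ∃ x ∈ F, countAbove F x = r := by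
  obtain ⟨x, hx, rfl⟩ := surj_on_of_inj_on_of_card_le (t := range #F)
    (fun x _ => countAbove F x)
    (fun x hx => mem_range.2 (by have := countBelow_add_countAbove hx; omega))
    (fun _ _ ha hb h => (countAbove_strictAntiOn F).injOn ha hb h) (by simp) r (mem_range.2 hr)
  exact ⟨x, hx, rfl⟩

variable [Inhabited α]

noncomputable def nthFromTop (F : Finset α) (r : ℕ) : α :=
  if h : ∃ x ∈ F, countAbove F x = r then h.choose else default

lemma nthFromTop_spec {r : ℕ} (hr : r < #F) :
    nthFromTop F r ∈ F ∧ countAbove F (nthFromTop F r) = r := by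
  have h := exists_countAbove_eq hr
  rw [nthFromTop, dif_pos h]
  exact h.choose_spec

lemma nthFromTop_countAbove (hx : x ∈ F) : nthFromTop F (countAbove F x) = x := by
  have hr : countAbove F x < #F := by have := countBelow_add_countAbove hx; omega
  obtain ⟨hmem, hcount⟩ := nthFromTop_spec hr
  exact (countAbove_strictAntiOn F).injOn hmem hx hcount

end Rank

section Flip

structure IsArcMap (n : ℕ) (c : ℕ → Option ℕ) : Prop where
  bounds : ∀ ⦃j i⦄, c j = some i → 1 ≤ i ∧ i < j ∧ j ≤ n
  injective : ∀ ⦃j j' i⦄, c j = some i → c j' = some i → j = j'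

def IsLeftEnd (c : ℕ → Option ℕ) (i : ℕ) : Prop := ∃ j, c j = some i

/-- For `p = c` the arcs of `c` open at `j`; for `p = flipArcs n k c` those of the partition being
built. -/
noncomputable def openAt (n : ℕ) (c p : ℕ → Option ℕ) (j : ℕ) : Finset ℕ :=
  (Icc 1 n).filter fun i => i < j ∧ IsLeftEnd c i ∧ ∀ j' < j, p j' ≠ some i

noncomputable def farOpenAt (n k : ℕ) (c p : ℕ → Option ℕ) (j : ℕ) : Finset ℕ :=
  (openAt n c p j).filter (· + k ≤ j)

noncomputable def flipStep (n k : ℕ) (c p : ℕ → Option ℕ) (j : ℕ) : Option ℕ :=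
  (c j).map fun i => if j < i + k then i
    else nthFromTop (farOpenAt n k c p j) (countBelow (farOpenAt n k c c j) i)

/-- `flipArcs` on `[0, J)`: `flipStep` at `j` reads the flipped arcs closed before `j`. -/
noncomputable def flipUpTo (n k : ℕ) (c : ℕ → Option ℕ) : ℕ → ℕ → Option ℕ
  | 0 => fun _ => none
  | J + 1 => Function.update (flipUpTo n k c J) J (flipStep n k c (flipUpTo n k c J) J)

noncomputable def flipArcs (n k : ℕ) (c : ℕ → Option ℕ) (j : ℕ) : Option ℕ :=
  flipStep n k c (flipUpTo n k c j) j

variable {n k : ℕ} {c p p' : ℕ → Option ℕ} {i j x : ℕ}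

lemma mem_openAt : x ∈ openAt n c p j ↔
    x ∈ Icc 1 n ∧ x < j ∧ IsLeftEnd c x ∧ ∀ j' < j, p j' ≠ some x :=
  mem_filter

lemma mem_farOpenAt : x ∈ farOpenAt n k c p j ↔ x ∈ openAt n c p j ∧ x + k ≤ j :=
  mem_filter

lemma openAt_congr (h : ∀ j' < j, p j' = p' j') : openAt n c p j = openAt n c p' j :=
  filter_congr fun x _ => and_congr_right' <| and_congr_right' <|
    forall₂_congr fun j' hj' => by rw [h j' hj']

lemma flipStep_congr (h : ∀ j' < j, p j' = p' j') : flipStep n k c p j = flipStep n k c p' j := by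
  simp only [flipStep, farOpenAt, openAt_congr h]

lemma flipUpTo_of_lt {J : ℕ} (h : x < J) : flipUpTo n k c J x = flipArcs n k c x := by
  induction J with
  | zero => omega
  | succ J ih =>
    rw [flipUpTo, Function.update_apply]
    split_ifs with hx
    · rw [hx, flipArcs]
    · exact ih (by omega)

lemma flipArcs_eq_flipStep : flipArcs n k c j = flipStep n k c (flipArcs n k c) j :=
  flipStep_congr fun _ h => flipUpTo_of_lt h

lemma flipArcs_eq_none_iff : flipArcs n k c j = none ↔ c j = none := by
  rw [flipArcs_eq_flipStep, flipStep, Option.map_eq_none_iff]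

lemma flipArcs_of_near (h : c j = some i) (hnear : j < i + k) : flipArcs n k c j = some i := by
  rw [flipArcs_eq_flipStep, flipStep, h, Option.map_some, if_pos hnear]

lemma flipArcs_of_far (h : c j = some i) (hfar : i + k ≤ j) :
    flipArcs n k c j = some (nthFromTop (farOpenAt n k c (flipArcs n k c) j)
      (countBelow (farOpenAt n k c c j) i)) := by
  rw [flipArcs_eq_flipStep, flipStep, h, Option.map_some, if_neg (by omega)]

lemma mem_openAt_succ (hp : ∀ j' ≤ j, p j' ≠ some j) :
    x ∈ openAt n c p (j + 1) ↔
      (x ∈ openAt n c p j ∧ p j ≠ some x) ∨ (x = j ∧ j ∈ Icc 1 n ∧ IsLeftEnd c j) := by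
  simp only [mem_openAt, Nat.lt_succ_iff_lt_or_eq]
  constructor
  · rintro ⟨hx, hxj | rfl, hl, hopen⟩
    · exact Or.inl ⟨⟨hx, hxj, hl, fun j' h => hopen j' (Or.inl h)⟩, hopen j (Or.inr rfl)⟩
    · exact Or.inr ⟨rfl, hx, hl⟩
  · rintro (⟨⟨hx, hxj, hl, hopen⟩, hpj⟩ | ⟨rfl, hx, hl⟩)
    · exact ⟨hx, Or.inl hxj, hl, fun j' => Or.rec (hopen j') fun h => h ▸ hpj⟩
    · exact ⟨hx, Or.inr rfl, hl, fun j' h => hp j' (by omega)⟩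

lemma card_openAt_succ (hp : ∀ j' ≤ j, p j' ≠ some j)
    (hpj : ∀ x, p j = some x → x ∈ openAt n c p j) :
    #(openAt n c p (j + 1)) + (if p j = none then 0 else 1) =
      #(openAt n c p j) + (if j ∈ Icc 1 n ∧ IsLeftEnd c j then 1 else 0) := by
  set S := (openAt n c p j).filter fun x => p j ≠ some x
  have hjS : j ∉ S := fun h => (mem_openAt.1 (mem_filter.1 h).1).2.1.false
  have hsucc : openAt n c p (j + 1) =
      if j ∈ Icc 1 n ∧ IsLeftEnd c j then insert j S else S := by
    ext x
    rw [mem_openAt_succ hp]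
    split_ifs with hj
    · simp only [mem_insert, S, mem_filter]
      exact ⟨Or.rec Or.inr fun h => Or.inl h.1, Or.rec (fun h => Or.inr ⟨h, hj⟩) Or.inl⟩
    · simp only [S, mem_filter, or_iff_left_iff_imp]
      exact fun h => (hj h.2).elim
  have hS : #S + (if p j = none then 0 else 1) = #(openAt n c p j) := by
    cases hp' : p j with
    | none => simp [S, hp']
    | some y =>
      have : S = (openAt n c p j).erase y := by
        ext x
        simp only [S, hp', mem_filter, mem_erase, ne_eq, Option.some_inj]
        tauto
      rw [this, card_erase_of_mem (hpj y hp')]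
      have := card_pos.2 ⟨y, hpj y hp'⟩
      simp only [reduceCtorEq, if_false]
      omega
  rw [hsucc]
  split_ifs at hS ⊢ <;> (try rw [card_insert_of_notMem hjS]) <;> omega

def AgreeAt (n k : ℕ) (c f : ℕ → Option ℕ) (j : ℕ) : Prop :=
  (∀ x, j < x + k → (x ∈ openAt n c c j ↔ x ∈ openAt n c f j)) ∧
    #(openAt n c c j) = #(openAt n c f j)

lemma AgreeAt.card_farOpenAt_eq {f : ℕ → Option ℕ} (h : AgreeAt n k c f j) :
    #(farOpenAt n k c c j) = #(farOpenAt n k c f j) := by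
  have hnear : (openAt n c c j).filter (¬ · + k ≤ j) = (openAt n c f j).filter (¬ · + k ≤ j) := by
    ext x
    simp only [mem_filter, not_le]
    exact and_congr_left (h.1 x)
  have h₁ := card_filter_add_card_filter_not (s := openAt n c c j) (· + k ≤ j)
  have h₂ := card_filter_add_card_filter_not (s := openAt n c f j) (· + k ≤ j)
  rw [hnear] at h₁
  unfold farOpenAt
  have := h.2
  omega

section Invariant

variable (hc : IsArcMap n c)
include hc

lemma self_mem_openAt (h : c j = some i) : i ∈ openAt n c c j := by
  obtain ⟨hi, hij, hj⟩ := hc.bounds h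
  exact mem_openAt.2 ⟨mem_Icc.2 ⟨hi, by omega⟩, hij, ⟨j, h⟩,
    fun j' hj' h' => hj'.ne (hc.injective h' h)⟩

variable (hA : AgreeAt n k c (flipArcs n k c) j)
include hA

lemma exists_flipArcs_eq_of_far (h : c j = some i) (hfar : i + k ≤ j) :
    ∃ y ∈ farOpenAt n k c (flipArcs n k c) j, flipArcs n k c j = some y ∧
      countAbove (farOpenAt n k c (flipArcs n k c) j) y = countBelow (farOpenAt n k c c j) i := by
  have hi : i ∈ farOpenAt n k c c j := mem_farOpenAt.2 ⟨self_mem_openAt hc h, hfar⟩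
  have hr : countBelow (farOpenAt n k c c j) i < #(farOpenAt n k c (flipArcs n k c) j) := by
    have := countBelow_add_countAbove hi
    have := hA.card_farOpenAt_eq
    omega
  obtain ⟨hmem, hcount⟩ := nthFromTop_spec hr
  exact ⟨_, hmem, flipArcs_of_far h hfar, hcount⟩

lemma mem_openAt_of_flipArcs_eq (h : flipArcs n k c j = some x) :
    x ∈ openAt n c (flipArcs n k c) j := by
  cases hi : c j with
  | none => simp [flipArcs_eq_none_iff.2 hi] at h
  | some i =>
    by_cases hnear : j < i + k
    · rw [flipArcs_of_near hi hnear, Option.some_inj] at h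
      subst h
      exact (hA.1 i hnear).1 (self_mem_openAt hc hi)
    · obtain ⟨y, hy, hfy, -⟩ := exists_flipArcs_eq_of_far hc hA hi (not_lt.1 hnear)
      rw [hfy, Option.some_inj] at h
      exact h ▸ (mem_farOpenAt.1 hy).1

lemma flipArcs_eq_some_iff_of_near (hx : j < x + k) :
    flipArcs n k c j = some x ↔ c j = some x := by
  cases h : c j with
  | none => simp [flipArcs_eq_none_iff.2 h]
  | some i =>
    by_cases hnear : j < i + k
    · rw [flipArcs_of_near h hnear]
    · obtain ⟨y, hy, hfy, -⟩ := exists_flipArcs_eq_of_far hc hA h (not_lt.1 hnear)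
      have := (mem_farOpenAt.1 hy).2
      rw [hfy, Option.some_inj, Option.some_inj]
      omega

end Invariant

theorem agreeAt_flipArcs (hc : IsArcMap n c) (j : ℕ) : AgreeAt n k c (flipArcs n k c) j := by
  induction j using Nat.strong_induction_on with
  | _ j IH =>
  rcases j with _ | j
  · simp [AgreeAt, openAt]
  have IH' : AgreeAt n k c (flipArcs n k c) j := IH j (by omega)
  have hpc : ∀ j' ≤ j, c j' ≠ some j := fun j' hj' h => by
    have := (hc.bounds h).2.1
    omega
  have hpf : ∀ j' ≤ j, flipArcs n k c j' ≠ some j := fun j' hj' h => by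
    have := (mem_openAt.1 (mem_openAt_of_flipArcs_eq hc (IH j' (by omega)) h)).2.1
    omega
  constructor
  · intro x hx
    rw [mem_openAt_succ hpc, mem_openAt_succ hpf, IH'.1 x (by omega), ne_eq, ne_eq,
      flipArcs_eq_some_iff_of_near hc IH' (x := x) (by omega)]
  · have hcard₁ := card_openAt_succ hpc fun x h => self_mem_openAt hc h
    have hcard₂ := card_openAt_succ hpf fun x h => mem_openAt_of_flipArcs_eq hc IH' h
    simp only [flipArcs_eq_none_iff] at hcard₂
    have := IH'.2
    split_ifs at hcard₁ hcard₂ <;> omega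

section Involution

variable (hc : IsArcMap n c)
include hc

theorem isArcMap_flipArcs : IsArcMap n (flipArcs n k c) where
  bounds j y h := by
    obtain ⟨hy, hyj, -⟩ := mem_openAt.1 (mem_openAt_of_flipArcs_eq hc (agreeAt_flipArcs hc j) h)
    cases hi : c j with
    | none => simp [flipArcs_eq_none_iff.2 hi] at h
    | some i => exact ⟨(mem_Icc.1 hy).1, hyj, (hc.bounds hi).2.2⟩
  injective := by
    suffices ∀ a b y, a < b → flipArcs n k c a = some y → flipArcs n k c b ≠ some y by
      intro a b y ha hb
      by_contra hab
      rcases Nat.lt_or_gt_of_ne hab with h | h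
      exacts [this a b y h ha hb, this b a y h hb ha]
    intro a b y hab ha hb
    exact (mem_openAt.1 (mem_openAt_of_flipArcs_eq hc (agreeAt_flipArcs hc b) hb)).2.2.2 a hab ha

theorem isLeftEnd_flipArcs_iff : IsLeftEnd (flipArcs n k c) x ↔ IsLeftEnd c x := by
  constructor
  · rintro ⟨j, h⟩
    exact (mem_openAt.1 (mem_openAt_of_flipArcs_eq hc (agreeAt_flipArcs hc j) h)).2.2.1
  · rintro ⟨j, h⟩
    by_contra hnot
    -- after `n`, every arc of `c` is closed, but `x` is still open in `flipArcs c`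
    have hempty : openAt n c c (n + 1) = ∅ := by
      refine eq_empty_of_forall_notMem fun y hy => ?_
      obtain ⟨-, -, ⟨j', hj'⟩, hopen⟩ := mem_openAt.1 hy
      exact hopen j' (by have := (hc.bounds hj').2.2; omega) hj'
    have hx : x ∈ openAt n c (flipArcs n k c) (n + 1) := by
      obtain ⟨hx, hxj, hjn⟩ := hc.bounds h
      exact mem_openAt.2 ⟨mem_Icc.2 ⟨hx, by omega⟩, by omega, ⟨j, h⟩,
        fun j' _ h' => hnot ⟨j', h'⟩⟩
    have := (agreeAt_flipArcs (k := k) hc (n + 1)).2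
    rw [hempty, card_empty] at this
    exact notMem_empty x (card_eq_zero.1 this.symm ▸ hx)

lemma farOpenAt_flipArcs : farOpenAt n k (flipArcs n k c) p j = farOpenAt n k c p j := by
  simp only [farOpenAt, openAt, isLeftEnd_flipArcs_iff hc]

theorem flipArcs_flipArcs : flipArcs n k (flipArcs n k c) = c := by
  funext j
  induction j using Nat.strong_induction_on with
  | _ j IH =>
  rw [flipArcs_eq_flipStep, flipStep_congr IH, flipStep, farOpenAt_flipArcs hc,
    farOpenAt_flipArcs hc]
  cases h : c j with
  | none => simp [flipArcs_eq_none_iff.2 h]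
  | some i =>
    by_cases hnear : j < i + k
    · simp [flipArcs_of_near h hnear, hnear]
    obtain ⟨y, hy, hfy, hcount⟩ :=
      exists_flipArcs_eq_of_far hc (agreeAt_flipArcs hc j) h (not_lt.1 hnear)
    have hi : i ∈ farOpenAt n k c c j := mem_farOpenAt.2 ⟨self_mem_openAt hc h, not_lt.1 hnear⟩
    have hcountBelow : countBelow (farOpenAt n k c (flipArcs n k c) j) y =
        countAbove (farOpenAt n k c c j) i := by
      have := countBelow_add_countAbove hi
      have := countBelow_add_countAbove hy
      have := (agreeAt_flipArcs (k := k) hc j).card_farOpenAt_eq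
      omega
    rw [hfy, Option.map_some, if_neg (by have := (mem_farOpenAt.1 hy).2; omega), hcountBelow,
      nthFromTop_countAbove hi]

end Involution

noncomputable def crossAt (n k : ℕ) (c : ℕ → Option ℕ) (j : ℕ) : ℕ :=
  (c j).elim 0 fun i => countAbove (farOpenAt n k c c j) i

noncomputable def nestAt (n k : ℕ) (c : ℕ → Option ℕ) (j : ℕ) : ℕ :=
  (c j).elim 0 fun i => if i + k ≤ j then countBelow (farOpenAt n k c c j) i else 0

theorem crossAt_flipArcs (hc : IsArcMap n c) (j : ℕ) :
    crossAt n k (flipArcs n k c) j = nestAt n k c j := by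
  rw [crossAt, nestAt, farOpenAt_flipArcs hc]
  cases h : c j with
  | none => simp [flipArcs_eq_none_iff.2 h]
  | some i =>
    by_cases hnear : j < i + k
    · rw [flipArcs_of_near h hnear, Option.elim_some, Option.elim_some, if_neg (by omega),
        countAbove, card_eq_zero, filter_eq_empty_iff]
      intro x hx
      have := (mem_farOpenAt.1 hx).2
      omega
    · obtain ⟨y, -, hfy, hcount⟩ :=
        exists_flipArcs_eq_of_far hc (agreeAt_flipArcs hc j) h (not_lt.1 hnear)
      rw [hfy, Option.elim_some, Option.elim_some, if_pos (not_lt.1 hnear), hcount]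

end Flip

section Partition

variable {n : ℕ} {P : SP n} {i j u v : ℕ}

noncomputable def arcMap (P : SP n) (j : ℕ) : Option ℕ :=
  if h : ∃ i, i < j ∧ IsEdge P i j then some h.choose else none

lemma isEdge_iff_mem_part (h : i < j) :
    IsEdge P i j ↔ i ∈ P.part j ∧ ∀ m ∈ P.part j, ¬(i < m ∧ m < j) := by
  constructor
  · rintro (⟨rfl, -⟩ | ⟨-, B, hB, hi, hj, hbetween⟩)
    · exact (lt_irrefl i h).elim
    · rw [P.part_eq_of_mem hB hj]
      exact ⟨hi, hbetween⟩
  · rintro ⟨hi, hbetween⟩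
    have hj : j ∈ Icc 1 n := P.part_nonempty.1 ⟨i, hi⟩
    exact Or.inr ⟨h, P.part j, P.part_mem.2 hj, hi, P.mem_part hj, hbetween⟩

lemma arcMap_eq_some_iff : arcMap P j = some i ↔ i < j ∧ IsEdge P i j := by
  have unique : ∀ i i', i < j → IsEdge P i j → i' < j → IsEdge P i' j → i ≤ i' :=
    fun i i' hi he hi' he' => by
      rw [isEdge_iff_mem_part hi] at he
      rw [isEdge_iff_mem_part hi'] at he'
      by_contra! h
      exact he'.2 i he.1 ⟨h, hi⟩
  unfold arcMap
  split_ifs with h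
  · rw [Option.some_inj]
    constructor
    · rintro rfl
      exact h.choose_spec
    · rintro ⟨hi, he⟩
      have := h.choose_spec
      exact le_antisymm (unique _ _ this.1 this.2 hi he) (unique _ _ hi he this.1 this.2)
  · simp only [false_iff]
    exact fun hi => h ⟨i, hi⟩

lemma mem_part_of_arcMap_eq_some (h : arcMap P j = some i) : i ∈ P.part j := by
  obtain ⟨hij, he⟩ := arcMap_eq_some_iff.1 h
  exact ((isEdge_iff_mem_part hij).1 he).1

theorem isArcMap_arcMap (P : SP n) : IsArcMap n (arcMap P) where
  bounds j i h := by
    have hi := mem_part_of_arcMap_eq_some h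
    have hj : j ∈ Icc 1 n := P.part_nonempty.1 ⟨i, hi⟩
    exact ⟨(mem_Icc.1 (P.part_subset j hi)).1, (arcMap_eq_some_iff.1 h).1, (mem_Icc.1 hj).2⟩
  injective := by
    suffices ∀ j j' i, j < j' → arcMap P j = some i → arcMap P j' ≠ some i by
      intro j j' i h h'
      by_contra hne
      rcases Nat.lt_or_gt_of_ne hne with hlt | hlt
      exacts [this j j' i hlt h h', this j' j i hlt h' h]
    intro j j' i hjj' h h'
    obtain ⟨hij, -⟩ := arcMap_eq_some_iff.1 h
    obtain ⟨hij', he'⟩ := arcMap_eq_some_iff.1 h'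
    have hj : j ∈ P.part j' := by
      rw [← P.part_eq_part_of_mem (mem_part_of_arcMap_eq_some h')]
      exact P.mem_part_comm.1 (mem_part_of_arcMap_eq_some h)
    exact ((isEdge_iff_mem_part hij').1 he').2 j hj ⟨hij, hjj'⟩

lemma exists_arcMap_eq_some_of_lt (hu : u ∈ P.part v) (huv : u < v) :
    ∃ w, arcMap P v = some w ∧ u ≤ w ∧ w ∈ P.part v := by
  have hne : ((P.part v).filter (· < v)).Nonempty := ⟨u, mem_filter.2 ⟨hu, huv⟩⟩
  obtain ⟨hw, hwv⟩ := mem_filter.1 (max'_mem _ hne)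
  refine ⟨_, arcMap_eq_some_iff.2 ⟨hwv, (isEdge_iff_mem_part hwv).2 ⟨hw, fun m hm hlt => ?_⟩⟩,
    le_max' _ u (mem_filter.2 ⟨hu, huv⟩), hw⟩
  exact (le_max' _ m (mem_filter.2 ⟨hm, hlt.2⟩)).not_gt hlt.1

lemma isLeftEnd_arcMap_of_lt (hu : u ∈ P.part v) (hvu : v < u) : IsLeftEnd (arcMap P) v := by
  have hne : ((P.part v).filter (v < ·)).Nonempty := ⟨u, mem_filter.2 ⟨hu, hvu⟩⟩
  obtain ⟨hw, hvw⟩ := mem_filter.1 (min'_mem _ hne)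
  have hpart := P.part_eq_part_of_mem hw
  refine ⟨_, arcMap_eq_some_iff.2 ⟨hvw, (isEdge_iff_mem_part hvw).2 ⟨?_, fun m hm hlt => ?_⟩⟩⟩
  · exact P.mem_part_comm.1 hw
  · rw [hpart] at hm
    exact (min'_le _ m (mem_filter.2 ⟨hm, hlt.1⟩)).not_gt hlt.2

lemma arcMap_eq_none_iff : arcMap P v = none ↔ ∀ u ∈ P.part v, v ≤ u := by
  constructor
  · intro h u hu
    by_contra! huv
    obtain ⟨w, hw, -⟩ := exists_arcMap_eq_some_of_lt hu huv
    simp [h] at hw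
  · intro h
    by_contra hne
    obtain ⟨i, hi⟩ := Option.ne_none_iff_exists'.1 hne
    exact (h i (mem_part_of_arcMap_eq_some hi)).not_gt (arcMap_eq_some_iff.1 hi).1

lemma not_isLeftEnd_arcMap_iff : ¬IsLeftEnd (arcMap P) v ↔ ∀ u ∈ P.part v, u ≤ v := by
  constructor
  · intro h u hu
    by_contra! hvu
    exact h (isLeftEnd_arcMap_of_lt hu hvu)
  · rintro h ⟨j, hj⟩
    exact (h j (P.mem_part_comm.1 (mem_part_of_arcMap_eq_some hj))).not_gt
      (arcMap_eq_some_iff.1 hj).1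

lemma openers_eq (P : SP n) : openers P = {v | IsLeftEnd (arcMap P) v ∧ arcMap P v = none} := by
  ext v
  simp only [Set.mem_ofPred_eq, arcMap_eq_none_iff]
  constructor
  · rintro ⟨B, hB, hv, hcard, hmin⟩
    rw [← P.part_eq_of_mem hB hv] at hcard hmin
    obtain ⟨u, hu, huv⟩ := exists_mem_ne hcard v
    exact ⟨isLeftEnd_arcMap_of_lt hu ((hmin u hu).lt_of_ne huv.symm), hmin⟩
  · rintro ⟨⟨j, hj⟩, hmin⟩
    have hu := P.mem_part_comm.1 (mem_part_of_arcMap_eq_some hj)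
    have hv : v ∈ Icc 1 n := P.part_nonempty.1 ⟨j, hu⟩
    exact ⟨P.part v, P.part_mem.2 hv, P.mem_part hv,
      one_lt_card.2 ⟨v, P.mem_part hv, j, hu, (arcMap_eq_some_iff.1 hj).1.ne⟩, hmin⟩

lemma closers_eq (P : SP n) : closers P = {v | arcMap P v ≠ none ∧ ¬IsLeftEnd (arcMap P) v} := by
  ext v
  simp only [Set.mem_ofPred_eq, not_isLeftEnd_arcMap_iff]
  constructor
  · rintro ⟨B, hB, hv, hcard, hmax⟩
    rw [← P.part_eq_of_mem hB hv] at hcard hmax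
    obtain ⟨u, hu, huv⟩ := exists_mem_ne hcard v
    obtain ⟨w, hw, -⟩ := exists_arcMap_eq_some_of_lt hu ((hmax u hu).lt_of_ne huv)
    exact ⟨by simp [hw], hmax⟩
  · rintro ⟨hne, hmax⟩
    obtain ⟨i, hi⟩ := Option.ne_none_iff_exists'.1 hne
    have hu := mem_part_of_arcMap_eq_some hi
    have hv : v ∈ Icc 1 n := P.part_nonempty.1 ⟨i, hu⟩
    exact ⟨P.part v, P.part_mem.2 hv, P.mem_part hv,
      one_lt_card.2 ⟨v, P.mem_part hv, i, hu, (arcMap_eq_some_iff.1 hi).1.ne'⟩, hmax⟩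

lemma singletons_eq (P : SP n) :
    singletons P = {v | v ∈ Icc 1 n ∧ arcMap P v = none ∧ ¬IsLeftEnd (arcMap P) v} := by
  ext v
  simp only [singletons, Set.mem_ofPred_eq, arcMap_eq_none_iff, not_isLeftEnd_arcMap_iff]
  constructor
  · intro h
    have hv : v ∈ Icc 1 n := P.le h (mem_singleton_self v)
    rw [P.part_eq_of_mem h (mem_singleton_self v)]
    simp [hv]
  · rintro ⟨hv, hmin, hmax⟩
    have : P.part v = {v} :=
      eq_singleton_iff_unique_mem.2 ⟨P.mem_part hv, fun u hu => le_antisymm (hmax u hu) (hmin u hu)⟩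
    exact this ▸ P.part_mem.2 hv

lemma transients_eq (P : SP n) :
    transients P = {v | arcMap P v ≠ none ∧ IsLeftEnd (arcMap P) v} := by
  ext v
  simp only [Set.mem_ofPred_eq, ne_eq, arcMap_eq_none_iff, not_forall, not_le]
  constructor
  · rintro ⟨B, hB, hv, ⟨a, ha, hav⟩, ⟨b, hb, hvb⟩⟩
    rw [← P.part_eq_of_mem hB hv] at ha hb
    exact ⟨⟨a, ha, hav⟩, isLeftEnd_arcMap_of_lt hb hvb⟩
  · rintro ⟨⟨a, ha, hav⟩, ⟨j, hj⟩⟩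
    have hv : v ∈ Icc 1 n := P.part_nonempty.1 ⟨a, ha⟩
    exact ⟨P.part v, P.part_mem.2 hv, P.mem_part hv, ⟨a, ha, hav⟩,
      ⟨j, P.mem_part_comm.1 (mem_part_of_arcMap_eq_some hj), (arcMap_eq_some_iff.1 hj).1⟩⟩

theorem types_eq_of_arcMap {P Q : SP n}
    (hright : ∀ v, arcMap Q v = none ↔ arcMap P v = none)
    (hleft : ∀ v, IsLeftEnd (arcMap Q) v ↔ IsLeftEnd (arcMap P) v) :
    openers Q = openers P ∧ closers Q = closers P ∧ singletons Q = singletons P ∧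
      transients Q = transients P := by
  simp only [openers_eq, closers_eq, singletons_eq, transients_eq, ne_eq, hright, hleft,
    and_self]

abbrev Reach (c : ℕ → Option ℕ) : ℕ → ℕ → Prop := Relation.ReflTransGen fun a b => c b = some a

lemma reach_total_of_target {c : ℕ → Option ℕ} {a u w : ℕ} (hu : Reach c u a)
    (hw : Reach c w a) : Reach c u w ∨ Reach c w u := by
  have key := Relation.ReflTransGen.total_of_right_unique
    (r := Function.swap fun a b => c b = some a)
    (fun _ _ _ h h' => Option.some_injective _ (h.symm.trans h'))
    (Relation.reflTransGen_swap.2 hu) (Relation.reflTransGen_swap.2 hw)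
  exact (key.imp Relation.reflTransGen_swap.1 Relation.reflTransGen_swap.1).symm

section Reconstruction

variable {c : ℕ → Option ℕ} (hc : IsArcMap n c)

include hc in
lemma le_of_reach {a b : ℕ} (h : Reach c a b) : a ≤ b := by
  induction h with
  | refl => rfl
  | tail _ hstep ih => exact ih.trans (hc.bounds hstep).2.1.le

include hc in
lemma reach_total_of_source {a u w : ℕ} (hu : Reach c a u) (hw : Reach c a w) :
    Reach c u w ∨ Reach c w u :=
  hu.total_of_right_unique (fun _ _ _ h h' => hc.injective h h') hw

def chainSetoid : Setoid ℕ where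
  r u v := Reach c u v ∨ Reach c v u
  iseqv := by
    refine ⟨fun _ => Or.inl .refl, Or.symm, ?_⟩
    rintro u v w (huv | hvu) (hvw | hwv)
    · exact Or.inl (huv.trans hvw)
    · exact reach_total_of_target huv hwv
    · exact reach_total_of_source hc hvu hvw
    · exact Or.inr (hwv.trans hvu)

variable (n c) in
noncomputable def ofArcMap : SP n :=
  Finpartition.ofSetSetoid (chainSetoid hc) (Icc 1 n)

include hc

lemma mem_part_ofArcMap {a b : ℕ} : b ∈ (ofArcMap n c hc).part a ↔
    a ∈ Icc 1 n ∧ b ∈ Icc 1 n ∧ (Reach c a b ∨ Reach c b a) :=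
  Finpartition.mem_part_ofSetSetoid_iff_rel _

theorem arcMap_ofArcMap : arcMap (ofArcMap n c hc) = c := by
  funext j
  refine Option.ext fun i => ?_
  rw [arcMap_eq_some_iff]
  constructor
  · rintro ⟨hij, he⟩
    rw [isEdge_iff_mem_part hij, mem_part_ofArcMap] at he
    obtain ⟨⟨hj, -, hji | hij'⟩, hbetween⟩ := he
    · exact absurd (le_of_reach hc hji) hij.not_ge
    obtain hji | ⟨p, hip, hpj⟩ := hij'.cases_tail
    · exact absurd hji hij.ne'
    obtain ⟨hp, hpj', -⟩ := hc.bounds hpj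
    have hpart : p ∈ (ofArcMap n c hc).part j := (mem_part_ofArcMap hc).2
      ⟨hj, mem_Icc.2 ⟨hp, by have := (mem_Icc.1 hj).2; omega⟩, Or.inr (.single hpj)⟩
    obtain rfl : i = p :=
      (le_of_reach hc hip).eq_or_lt.resolve_right fun h => hbetween p hpart ⟨h, hpj'⟩
    exact hpj
  · intro h
    obtain ⟨hi, hij, hjn⟩ := hc.bounds h
    refine ⟨hij, (isEdge_iff_mem_part hij).2 ⟨(mem_part_ofArcMap hc).2 ⟨mem_Icc.2 ⟨by omega, hjn⟩,
      mem_Icc.2 ⟨hi, by omega⟩, Or.inr (.single h)⟩, fun m hm hbetween => ?_⟩⟩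
    obtain ⟨-, -, hjm | hmj⟩ := (mem_part_ofArcMap hc).1 hm
    · exact absurd (le_of_reach hc hjm) hbetween.2.not_ge
    obtain hjm | ⟨p, hmp, hpj⟩ := hmj.cases_tail
    · exact hbetween.2.ne hjm.symm
    obtain rfl : p = i := Option.some_injective _ (hpj.symm.trans h)
    exact absurd (le_of_reach hc hmp) hbetween.1.not_ge

end Reconstruction

lemma mem_part_of_reach_arcMap {P : SP n} {a b : ℕ} (h : Reach (arcMap P) a b) (ha : a ∈ Icc 1 n) :
    b ∈ P.part a := by
  induction h with
  | refl => exact P.mem_part ha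
  | tail _ hstep ih =>
    exact P.part_eq_part_of_mem ih ▸ P.mem_part_comm.1 (mem_part_of_arcMap_eq_some hstep)

lemma reach_arcMap_of_mem_part {P : SP n} (hu : u ∈ P.part v) (huv : u ≤ v) :
    Reach (arcMap P) u v := by
  induction v using Nat.strong_induction_on with
  | _ v IH =>
  obtain rfl | huv := huv.eq_or_lt
  · exact .refl
  obtain ⟨w, hw, huw, hwv⟩ := exists_arcMap_eq_some_of_lt hu huv
  have hu' : u ∈ P.part w := P.part_eq_part_of_mem hwv ▸ hu
  exact (IH w ((isArcMap_arcMap P).bounds hw).2.1 hu' huw).tail hw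

theorem ofArcMap_arcMap (P : SP n) : ofArcMap n (arcMap P) (isArcMap_arcMap P) = P := by
  refine Finpartition.ext_of_mem_part fun a b => ?_
  rw [mem_part_ofArcMap]
  constructor
  · rintro ⟨ha, hb, hab | hba⟩
    exacts [mem_part_of_reach_arcMap hab ha, P.mem_part_comm.1 (mem_part_of_reach_arcMap hba hb)]
  · intro hb
    have ha : a ∈ Icc 1 n := P.part_nonempty.1 ⟨b, hb⟩
    refine ⟨ha, P.part_subset a hb, ?_⟩
    rcases le_total a b with hab | hba
    · exact Or.inl (reach_arcMap_of_mem_part (P.mem_part_comm.1 hb) hab)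
    · exact Or.inr (reach_arcMap_of_mem_part hb hba)

theorem ofArcMap_eq_iff {c : ℕ → Option ℕ} (hc : IsArcMap n c) (P : SP n) :
    ofArcMap n c hc = P ↔ c = arcMap P := by
  constructor
  · rintro rfl
    exact (arcMap_ofArcMap hc).symm
  · rintro rfl
    exact ofArcMap_arcMap P

section Counting

variable {k : ℕ} {c : ℕ → Option ℕ} {i j x : ℕ}

def arcPairs (c : ℕ → Option ℕ) (R : ℕ × ℕ → ℕ × ℕ → Prop) : Set ((ℕ × ℕ) × ℕ × ℕ) :=
  {p | c p.1.2 = some p.1.1 ∧ c p.2.2 = some p.2.1 ∧ R p.1 p.2}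

lemma setOf_isEdge_eq_arcPairs {P : SP n} {R : ℕ × ℕ → ℕ × ℕ → Prop}
    (hR : ∀ e₁ e₂, R e₁ e₂ → e₁.1 < e₁.2 ∧ e₂.1 < e₂.2) :
    {p : (ℕ × ℕ) × ℕ × ℕ | IsEdge P p.1.1 p.1.2 ∧ IsEdge P p.2.1 p.2.2 ∧ R p.1 p.2} =
      arcPairs (arcMap P) R := by
  ext p
  simp only [arcPairs, Set.mem_ofPred_eq]
  constructor
  · rintro ⟨h₁, h₂, hp⟩
    obtain ⟨hlt₁, hlt₂⟩ := hR _ _ hp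
    exact ⟨arcMap_eq_some_iff.2 ⟨hlt₁, h₁⟩, arcMap_eq_some_iff.2 ⟨hlt₂, h₂⟩, hp⟩
  · rintro ⟨h₁, h₂, hp⟩
    exact ⟨(arcMap_eq_some_iff.1 h₁).2, (arcMap_eq_some_iff.1 h₂).2, hp⟩

variable (hc : IsArcMap n c)
include hc

lemma arcPairs_finite (R : ℕ × ℕ → ℕ × ℕ → Prop) : (arcPairs c R).Finite := by
  refine ((Icc 1 n ×ˢ Icc 1 n) ×ˢ (Icc 1 n ×ˢ Icc 1 n)).finite_toSet.subset ?_
  rintro p ⟨h₁, h₂, -⟩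
  have b₁ := hc.bounds h₁
  have b₂ := hc.bounds h₂
  simp only [coe_product, Set.mem_prod, coe_Icc, Set.mem_Icc]
  omega

lemma mem_openAt_self_iff : x ∈ openAt n c c j ↔ x < j ∧ ∃ y, j ≤ y ∧ c y = some x := by
  rw [mem_openAt]
  constructor
  · rintro ⟨-, hxj, ⟨y, hy⟩, hopen⟩
    exact ⟨hxj, y, not_lt.1 fun h => hopen y h hy, hy⟩
  · rintro ⟨hxj, y, hjy, hy⟩
    have := hc.bounds hy
    exact ⟨mem_Icc.2 ⟨this.1, by omega⟩, hxj, ⟨y, hy⟩,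
      fun j' hj' h => (hj'.trans_le hjy).ne (hc.injective h hy)⟩

lemma ncard_arcsOver (hk : 1 ≤ k) (h : c j = some i) {Q : ℕ → Prop} [DecidablePred Q] (hQ : ¬Q i) :
    {e : ℕ × ℕ | c e.2 = some e.1 ∧ j < e.2 ∧ e.1 + k ≤ j ∧ Q e.1}.ncard =
      #((farOpenAt n k c c j).filter Q) := by
  rw [← Set.ncard_coe_finset]
  refine Set.ncard_congr (fun e _ => e.1) ?_ ?_ ?_
  · rintro ⟨x, y⟩ ⟨hy, hjy, hfar, hQx⟩
    simp only [coe_filter, mem_farOpenAt, mem_openAt_self_iff hc, Set.mem_ofPred_eq]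
    exact ⟨⟨⟨by omega, y, hjy.le, hy⟩, hfar⟩, hQx⟩
  · rintro ⟨x, y⟩ ⟨x', y'⟩ ⟨hy, -⟩ ⟨hy', -⟩ (rfl : x = x')
    simp only at hy hy'
    rw [hc.injective hy hy']
  · intro x hx
    simp only [coe_filter, mem_farOpenAt, mem_openAt_self_iff hc, Set.mem_ofPred_eq] at hx
    obtain ⟨⟨⟨-, y, hjy, hy⟩, hfar⟩, hQx⟩ := hx
    have hyj : y ≠ j := by
      rintro rfl
      obtain rfl : x = i := Option.some_injective _ (hy.symm.trans h)
      exact hQ hQx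
    exact ⟨(x, y), ⟨hy, lt_of_le_of_ne hjy hyj.symm, hfar, hQx⟩, rfl⟩

lemma ncard_arcPairs_crossPair (hk : 1 ≤ k) :
    (arcPairs c (CrossPair k)).ncard = ∑ j ∈ Icc 1 n, crossAt n k c j := by
  rw [Set.ncard_eq_sum_ncard_fiber (arcPairs_finite hc _) (f := fun p => p.1.2) (t := Icc 1 n)
    fun p hp => mem_Icc.2 (by have := hc.bounds hp.1; omega)]
  refine sum_congr rfl fun j _ => ?_
  rw [crossAt]
  cases h : c j with
  | none =>
    rw [Option.elim_none, Set.ncard_eq_zero ((arcPairs_finite hc _).sep _)]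
    ext ⟨⟨i₁, j₁⟩, e₂⟩
    simp only [arcPairs, Set.mem_ofPred_eq, Set.mem_empty_iff_false, iff_false]
    rintro ⟨⟨h₁, -⟩, rfl : j₁ = j⟩
    simp [h] at h₁
  | some i =>
    have hfiber : {p ∈ arcPairs c (CrossPair k) | p.1.2 = j} =
        Prod.mk (i, j) '' {e | c e.2 = some e.1 ∧ j < e.2 ∧ e.1 + k ≤ j ∧ i < e.1} := by
      ext ⟨⟨i₁, j₁⟩, i₂, j₂⟩
      simp only [arcPairs, CrossPair, Set.mem_ofPred_eq, Set.mem_image]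
      constructor
      · rintro ⟨⟨h₁, h₂, hlt, hle, hlt', hdist⟩, rfl : j₁ = j⟩
        obtain rfl : i₁ = i := Option.some_injective _ (h₁.symm.trans h)
        exact ⟨(i₂, j₂), ⟨h₂, hlt', by omega, hlt⟩, rfl⟩
      · rintro ⟨⟨x, y⟩, ⟨hy, hjy, hfar, hix⟩, hxy⟩
        obtain ⟨⟨rfl, rfl⟩, rfl, rfl⟩ := Prod.mk.inj hxy |>.imp Prod.mk.inj Prod.mk.inj
        exact ⟨⟨h, hy, hix, by omega, hjy, by omega⟩, rfl⟩
    rw [hfiber, Set.ncard_image_of_injective _ (Prod.mk_right_injective _),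
      ncard_arcsOver hc hk h (Q := (i < ·)) (lt_irrefl i), Option.elim_some, countAbove]

lemma ncard_arcPairs_nestPair (hk : 1 ≤ k) :
    (arcPairs c (NestPair k)).ncard = ∑ j ∈ Icc 1 n, nestAt n k c j := by
  rw [Set.ncard_eq_sum_ncard_fiber (arcPairs_finite hc _) (f := fun p => p.2.2) (t := Icc 1 n)
    fun p hp => mem_Icc.2 (by have := hc.bounds hp.2.1; omega)]
  refine sum_congr rfl fun j _ => ?_
  rw [nestAt]
  cases h : c j with
  | none =>
    rw [Option.elim_none, Set.ncard_eq_zero ((arcPairs_finite hc _).sep _)]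
    ext ⟨e₁, i₂, j₂⟩
    simp only [arcPairs, Set.mem_ofPred_eq, Set.mem_empty_iff_false, iff_false]
    rintro ⟨⟨-, h₂, -⟩, rfl : j₂ = j⟩
    simp [h] at h₂
  | some i =>
    rw [Option.elim_some]
    split_ifs with hfar
    · have hfiber : {p ∈ arcPairs c (NestPair k) | p.2.2 = j} =
          (·, (i, j)) '' {e | c e.2 = some e.1 ∧ j < e.2 ∧ e.1 + k ≤ j ∧ e.1 < i} := by
        ext ⟨⟨i₁, j₁⟩, i₂, j₂⟩
        simp only [arcPairs, NestPair, Set.mem_ofPred_eq, Set.mem_image]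
        constructor
        · rintro ⟨⟨h₁, h₂, hlt, hle, hlt', hdist⟩, rfl : j₂ = j⟩
          obtain rfl : i₂ = i := Option.some_injective _ (h₂.symm.trans h)
          exact ⟨(i₁, j₁), ⟨h₁, hlt', by omega, hlt⟩, rfl⟩
        · rintro ⟨⟨x, y⟩, ⟨hy, hjy, -, hxi⟩, hxy⟩
          obtain ⟨⟨rfl, rfl⟩, rfl, rfl⟩ := Prod.mk.inj hxy |>.imp Prod.mk.inj Prod.mk.inj
          exact ⟨⟨hy, h, hxi, by omega, hjy, by omega⟩, rfl⟩
      rw [hfiber, Set.ncard_image_of_injective _ (Prod.mk_left_injective _),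
        ncard_arcsOver hc hk h (Q := (· < i)) (lt_irrefl i), countBelow]
    · rw [Set.ncard_eq_zero ((arcPairs_finite hc _).sep _)]
      ext ⟨e₁, i₂, j₂⟩
      simp only [arcPairs, NestPair, Set.mem_ofPred_eq, Set.mem_empty_iff_false, iff_false]
      rintro ⟨⟨-, h₂, -, hle, -, hdist⟩, rfl : j₂ = j⟩
      obtain rfl : i₂ = i := Option.some_injective _ (h₂.symm.trans h)
      omega

end Counting

theorem dcr_eq_sum_crossAt {k : ℕ} (hk : 1 ≤ k) (P : SP n) :
    dcr k P = ∑ j ∈ Icc 1 n, crossAt n k (arcMap P) j := by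
  rw [dcr, setOf_isEdge_eq_arcPairs fun e₁ e₂ h => by unfold CrossPair at h; omega,
    ncard_arcPairs_crossPair (isArcMap_arcMap P) hk]

theorem dne_eq_sum_nestAt {k : ℕ} (hk : 1 ≤ k) (P : SP n) :
    dne k P = ∑ j ∈ Icc 1 n, nestAt n k (arcMap P) j := by
  rw [dne, setOf_isEdge_eq_arcPairs fun e₁ e₂ h => by unfold NestPair at h; omega,
    ncard_arcPairs_nestPair (isArcMap_arcMap P) hk]

noncomputable def flipPartition (k : ℕ) (P : SP n) : SP n :=
  ofArcMap n (flipArcs n k (arcMap P)) (isArcMap_flipArcs (isArcMap_arcMap P))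

variable {k : ℕ} {P : SP n}

lemma arcMap_flipPartition : arcMap (flipPartition k P) = flipArcs n k (arcMap P) :=
  arcMap_ofArcMap _

theorem flipPartition_flipPartition (P : SP n) : flipPartition k (flipPartition k P) = P := by
  rw [flipPartition, ofArcMap_eq_iff, arcMap_flipPartition, flipArcs_flipArcs (isArcMap_arcMap P)]

theorem dcr_flipPartition (hk : 1 ≤ k) (P : SP n) : dcr k (flipPartition k P) = dne k P := by
  rw [dcr_eq_sum_crossAt hk, dne_eq_sum_nestAt hk, arcMap_flipPartition]
  exact sum_congr rfl fun j _ => crossAt_flipArcs (isArcMap_arcMap P) j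

theorem dne_flipPartition (hk : 1 ≤ k) (P : SP n) : dne k (flipPartition k P) = dcr k P := by
  conv_rhs => rw [← flipPartition_flipPartition (k := k) P]
  exact (dcr_flipPartition hk _).symm

theorem types_flipPartition (P : SP n) :
    openers (flipPartition k P) = openers P ∧ closers (flipPartition k P) = closers P ∧
      singletons (flipPartition k P) = singletons P ∧
        transients (flipPartition k P) = transients P :=
  types_eq_of_arcMap (fun _ => by rw [arcMap_flipPartition, flipArcs_eq_none_iff])
    (fun _ => by rw [arcMap_flipPartition, isLeftEnd_flipArcs_iff (isArcMap_arcMap P)])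

end Partition

end DistantCrossing

theorem exists_type_preserving_involution_general (k n : ℕ) (hk : 1 ≤ k) :
    ∃ φ : SP n → SP n, (∀ P, φ (φ P) = P) ∧
      (∀ P, dcr k (φ P) = dne k P ∧ dne k (φ P) = dcr k P) ∧
      ∀ P, openers (φ P) = openers P ∧ closers (φ P) = closers P ∧
        singletons (φ P) = singletons P ∧ transients (φ P) = transients P :=
  ⟨DistantCrossing.flipPartition k, DistantCrossing.flipPartition_flipPartition,
    fun P => ⟨DistantCrossing.dcr_flipPartition hk P, DistantCrossing.dne_flipPartition hk P⟩,
    DistantCrossing.types_flipPartition⟩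

/-- For `k ≥ 1` there is a type-preserving involution on partitions of `[n]`
exchanging `dcr k` and `dne k`: it preserves openers, closers, singletons, and
transients. -/
theorem exists_type_preserving_involution (k n : ℕ) (hk : 1 ≤ k) (hn : 1 ≤ n) :
    ∃ φ : SP n → SP n, (∀ P, φ (φ P) = P) ∧
      (∀ P, dcr k (φ P) = dne k P ∧ dne k (φ P) = dcr k P) ∧
      ∀ P, openers (φ P) = openers P ∧ closers (φ P) = closers P ∧
        singletons (φ P) = singletons P ∧ transients (φ P) = transients P :=
  exists_type_preserving_involution_general k n hk
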